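/- Let Y = (Y₁,…,Y_M) be random variables taking values in {0,1}^L each, and let T = T(Y) ⊆ {1,…,M} be a deterministic function of Y. Suppose that almost surely, every Yᵢ with i ∉ T lies within Hamming distance αL of some Y_j with j ∈ T, where 0 < α < 1/2. Then H(Y) ≤ M + L·E[|T|] + (M − E[|T|])(log₂ E[|T|] + L·H(α)). -/

import Mathlib

/-- The binary entropy function. -/
noncomputable def binEnt (x : ℝ) : ℝ := -(x * Real.logb 2 x) - (1 - x) * Real.logb 2 (1 - x)

/-- The probability mass function of a random variable `X` on a finite
probability space with point masses `p`. -/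
noncomputable def rvPMF {Ω α : Type*} [Fintype Ω] [DecidableEq α]
    (p : Ω → ℝ) (X : Ω → α) (a : α) : ℝ :=
  ∑ ω ∈ Finset.univ.filter (fun ω => X ω = a), p ω

/-- Shannon entropy (base 2) of a random variable on a finite probability space. -/
noncomputable def shEnt {Ω α : Type*} [Fintype Ω] [Fintype α] [DecidableEq α]
    (p : Ω → ℝ) (X : Ω → α) : ℝ :=
  -∑ a : α, rvPMF p X a * Real.logb 2 (rvPMF p X a)

/-!
Encode `Y` by `M` bits naming the set `T`, then `L` bits for each string `Y j` with `j ∈ T`,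
and for every other `i` an index `j ∈ T` within Hamming distance `αL` of `Y i` together with
the difference `Y i + Y j`, a point of the Hamming ball of radius `αL`, which has at most
`2 ^ (L H(α))` points. These code lengths satisfy Kraft's inequality, so Gibbs' inequality
bounds `H(Y)` by the expected length; the length is a concave function of `|T|`, and Jensen's
inequality replaces `|T|` by its mean.
-/

open Finset Real

theorem mul_log_sub_log_le {P q : ℝ} (hP : 0 ≤ P) (hq : 0 ≤ q) (hpos : P ≠ 0 → 0 < q) :
    P * (log q - log P) ≤ q - P := by
  rcases hP.eq_or_lt with rfl | hP
  · simpa using hq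
  have hq := hpos hP.ne'
  calc P * (log q - log P) = P * log (q / P) := by rw [log_div hq.ne' hP.ne']
    _ ≤ P * (q / P - 1) := by gcongr; exact log_le_sub_one_of_pos (div_pos hq hP)
    _ = q - P := by field_simp

theorem sum_mul_logb_le_sum_mul_logb_self {γ : Type*} [Fintype γ] {P q : γ → ℝ}
    (hP : ∀ a, 0 ≤ P a) (hP1 : ∑ a, P a = 1) (hq : ∀ a, 0 ≤ q a) (hq1 : ∑ a, q a ≤ 1)
    (hpos : ∀ a, P a ≠ 0 → 0 < q a) :
    ∑ a, P a * logb 2 (q a) ≤ ∑ a, P a * logb 2 (P a) := by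
  suffices ∑ a, P a * log (q a) ≤ ∑ a, P a * log (P a) by
    simp only [logb, mul_div_assoc', ← sum_div]
    gcongr
  have := sum_le_sum fun a (_ : a ∈ univ) => mul_log_sub_log_le (hP a) (hq a) (hpos a)
  simp only [mul_sub, sum_sub_distrib] at this
  linarith

theorem sum_rvPMF_mul {Ω α : Type*} [Fintype Ω] [DecidableEq α] [Fintype α]
    (p : Ω → ℝ) (X : Ω → α) (g : α → ℝ) :
    ∑ a, rvPMF p X a * g a = ∑ ω, p ω * g (X ω) := by
  rw [← sum_fiberwise univ X]
  refine sum_congr rfl fun a _ => ?_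
  rw [rvPMF, sum_mul]
  exact sum_congr rfl fun ω hω => by rw [(mem_filter.1 hω).2]

theorem shEnt_le_sum_mul_of_sum_two_rpow_neg_le_one {Ω α : Type*} [Fintype Ω] [Fintype α]
    [DecidableEq α] {p : Ω → ℝ} (hp : ∀ ω, 0 ≤ p ω) (hsum : ∑ ω, p ω = 1) {X : Ω → α}
    {S : Finset α} {ℓ : α → ℝ} (hkraft : ∑ a ∈ S, (2 : ℝ) ^ (-ℓ a) ≤ 1)
    (hX : ∀ ω, p ω ≠ 0 → X ω ∈ S) :
    shEnt p X ≤ ∑ ω, p ω * ℓ (X ω) := by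
  set q : α → ℝ := fun a => if a ∈ S then 2 ^ (-ℓ a) else 0
  have hsupp : ∀ a, rvPMF p X a ≠ 0 → a ∈ S := fun a ha => by
    obtain ⟨ω, hω, hpω⟩ := exists_ne_zero_of_sum_ne_zero ha
    exact (mem_filter.1 hω).2 ▸ hX ω hpω
  have hgibbs := sum_mul_logb_le_sum_mul_logb_self (P := rvPMF p X) (q := q)
    (fun a => sum_nonneg fun ω _ => hp ω) (by simpa [hsum] using sum_rvPMF_mul p X 1)
    (fun a => by positivity) (by simpa [q, ← sum_filter] using hkraft)
    (fun a ha => by simp [q, hsupp a ha, rpow_pos_of_pos])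
  have hlen : ∀ a, rvPMF p X a * logb 2 (q a) = rvPMF p X a * -ℓ a := fun a => by
    by_cases ha : rvPMF p X a = 0
    · simp [ha]
    · simp [q, hsupp a ha]
  rw [shEnt, ← sum_rvPMF_mul p X ℓ]
  simp only [hlen, mul_neg, sum_neg_distrib] at hgibbs
  linarith

theorem two_rpow_neg_mul_binEnt {α : ℝ} (h0 : 0 < α) (h1 : α < 1) (x : ℝ) :
    (2 : ℝ) ^ (-(x * binEnt α)) = α ^ (α * x) * (1 - α) ^ ((1 - α) * x) := by
  have h1' : 0 < 1 - α := by linarith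
  rw [rpow_def_of_pos two_pos, rpow_def_of_pos h0, rpow_def_of_pos h1', ← exp_add, binEnt,
    logb, logb]
  congr 1
  field_simp
  ring

theorem rpow_mul_one_sub_rpow_sub_le_of_le {α x y L : ℝ} (h0 : 0 < α) (hα : α ≤ 1 / 2)
    (hxy : x ≤ y) :
    α ^ y * (1 - α) ^ (L - y) ≤ α ^ x * (1 - α) ^ (L - x) := by
  have h1 : 0 < 1 - α := by linarith
  have key : ∀ z, α ^ z * (1 - α) ^ (L - z) = (1 - α) ^ L * (α / (1 - α)) ^ z := fun z => by
    rw [div_rpow h0.le h1.le, rpow_sub h1]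
    field_simp
  rw [key, key]
  gcongr (1 - α) ^ L * ?_
  exact rpow_le_rpow_of_exponent_ge (div_pos h0 h1) ((div_le_one h1).2 (by linarith)) hxy

theorem sum_range_choose_le_two_rpow_mul_binEnt {L k : ℕ} {α : ℝ} (h0 : 0 < α) (hα : α ≤ 1 / 2)
    (hk : (k : ℝ) ≤ α * L) :
    ∑ i ∈ range (k + 1), (L.choose i : ℝ) ≤ 2 ^ (L * binEnt α) := by
  have h1 : 0 < 1 - α := by linarith
  set c := α ^ (α * L) * (1 - α) ^ ((1 - α) * L) with hc
  have hkL : k ≤ L := by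
    have : α * L ≤ L := by nlinarith [(L.cast_nonneg : (0:ℝ) ≤ L)]
    exact_mod_cast hk.trans this
  have hterm : ∀ i ∈ range (k + 1), c ≤ α ^ i * (1 - α) ^ (L - i) := fun i hi => by
    have hik : i ≤ k := Nat.lt_succ_iff.1 (mem_range.1 hi)
    have := rpow_mul_one_sub_rpow_sub_le_of_le (L := L) h0 hα (hk.trans' (Nat.cast_le.2 hik))
    rw [← rpow_natCast, ← rpow_natCast, Nat.cast_sub (hik.trans hkL)]
    convert this using 3
    ring
  -- `c = 2 ^ (-(L H(α)))` is below every term `i ≤ k` of the expansion of `(α + (1 - α)) ^ L`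
  have hmass : c * ∑ i ∈ range (k + 1), (L.choose i : ℝ) ≤ 1 := calc
    _ ≤ ∑ i ∈ range (k + 1), α ^ i * (1 - α) ^ (L - i) * L.choose i := by
      rw [mul_sum]; gcongr with i hi; exact hterm i hi
    _ ≤ ∑ i ∈ range (L + 1), α ^ i * (1 - α) ^ (L - i) * L.choose i := by
      gcongr
    _ = 1 := by rw [← add_pow]; simp
  rw [hc, ← two_rpow_neg_mul_binEnt h0 (by linarith), rpow_neg zero_le_two, mul_comm] at hmass
  rwa [← le_div_iff₀ (by positivity), one_div, inv_inv] at hmass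

theorem card_filter_hammingNorm_le_le_sum_choose {ι : Type*} [Fintype ι] [DecidableEq ι] (k : ℕ) :
    #{x : ι → Bool | hammingNorm x ≤ k} ≤ ∑ i ∈ range (k + 1), (Fintype.card ι).choose i := by
  let supp : (ι → Bool) → Finset ι := fun x => {i | x i ≠ 0}
  calc _ ≤ #((range (k + 1)).biUnion fun i => powersetCard i univ) := by
        refine card_le_card_of_injOn supp ?_ ?_
        · intro x hx
          simp only [coe_filter, mem_univ, true_and] at hx
          simpa [supp, Nat.lt_succ_iff, hammingNorm] using hx
        · intro x _ y _ hxy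
          funext i
          have := Finset.ext_iff.1 hxy i
          simp only [supp, mem_filter, mem_univ, true_and] at this
          revert this
          cases x i <;> cases y i <;> decide
    _ ≤ _ := card_biUnion_le.trans (by simp)

theorem card_filter_forall_exists_neg_add_mem_le {ι γ : Type*} [Fintype ι] [DecidableEq ι]
    [Fintype γ] [DecidableEq γ] [AddGroup γ] (t : Finset ι) (D : Finset γ) :
    #{a : ι → γ | ∀ i ∉ t, ∃ j ∈ t, -a i + a j ∈ D} ≤
      Fintype.card γ ^ #t * (#t * #D) ^ (Fintype.card ι - #t) := by
  let decode : (t → γ) × (↥tᶜ → t × D) → ι → γ := fun ug i =>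
    if h : i ∈ t then ug.1 ⟨i, h⟩
    else ug.1 (ug.2 ⟨i, mem_compl.2 h⟩).1 + -(ug.2 ⟨i, mem_compl.2 h⟩).2
  calc _ ≤ #(univ : Finset ((t → γ) × (↥tᶜ → t × D))) := card_le_card_of_surjOn decode ?_
    _ = _ := by simp [Fintype.card_prod]
  intro a ha
  simp only [coe_filter, mem_univ, true_and] at ha
  choose j hj hD using ha
  let g : ↥tᶜ → t × D := fun i =>
    (⟨j i (mem_compl.1 i.2), hj i (mem_compl.1 i.2)⟩, ⟨_, hD i (mem_compl.1 i.2)⟩)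
  refine ⟨(fun i => a i, g), by simp, ?_⟩
  funext i
  by_cases h : i ∈ t <;> simp [decode, g, h]

def IsHammingCover {ι : Type*} {L : ℕ} (k : ℕ) (t : Finset ι) (a : ι → Fin L → Bool) : Prop :=
  ∀ i ∉ t, ∃ j ∈ t, hammingDist (a i) (a j) ≤ k

instance {ι : Type*} [Fintype ι] [DecidableEq ι] {L : ℕ} (k : ℕ) (t : Finset ι) :
    DecidablePred (IsHammingCover (L := L) k t) := fun a => by
  unfold IsHammingCover; infer_instance

theorem IsHammingCover.nonempty {ι : Type*} [Nonempty ι] {L k : ℕ} {t : Finset ι}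
    {a : ι → Fin L → Bool} (h : IsHammingCover k t a) : t.Nonempty := by
  by_contra ht
  obtain ⟨j, hj, -⟩ := h (Classical.arbitrary ι) (by simp_all)
  exact ht ⟨j, hj⟩

theorem card_filter_isHammingCover_le {ι : Type*} [Fintype ι] [DecidableEq ι] (L k : ℕ)
    (t : Finset ι) :
    #{a : ι → Fin L → Bool | IsHammingCover k t a} ≤
      (2 ^ L) ^ #t * (#t * #{x : Fin L → Bool | hammingNorm x ≤ k}) ^ (Fintype.card ι - #t) := by
  convert card_filter_forall_exists_neg_add_mem_le t {x : Fin L → Bool | hammingNorm x ≤ k}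
    using 4 with a
  · simp [IsHammingCover, hammingDist_eq_hammingNorm]
  · simp

/-- Here `x = #T` and `2 ^ β` bounds the size of the Hamming ball. Taken as a function of a real
`x` so that Jensen's inequality applies to it. -/
noncomputable def coverCodeLength (M L : ℕ) (β x : ℝ) : ℝ :=
  M + L * x + (M - x) * (logb 2 x + β)

theorem two_rpow_coverCodeLength {M L : ℕ} (β : ℝ) {t : Finset (Fin M)} (ht : t.Nonempty) :
    (2 : ℝ) ^ coverCodeLength M L β #t = 2 ^ M * ((2 ^ L) ^ #t * (#t * 2 ^ β) ^ (M - #t)) := by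
  have hcard : ((M - #t : ℕ) : ℝ) = M - #t := Nat.cast_sub (by simpa using card_le_univ t)
  have ht0 : (0 : ℝ) < #t := by exact_mod_cast ht.card_pos
  have h1 : (2 : ℝ) ^ ((L : ℝ) * #t) = (2 ^ L) ^ #t := by
    rw [rpow_mul zero_le_two, rpow_natCast, rpow_natCast]
  have h2 : (2 : ℝ) ^ ((M - #t) * (logb 2 #t + β)) = (#t * 2 ^ β) ^ (M - #t) := by
    rw [← hcard, mul_comm, rpow_mul zero_le_two, rpow_natCast, rpow_add two_pos,
      rpow_logb two_pos (by norm_num) ht0]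
  rw [coverCodeLength, rpow_add two_pos, rpow_add two_pos, rpow_natCast, h1, h2, mul_assoc]

theorem sum_two_rpow_neg_coverCodeLength_le_one {M L k : ℕ} {β : ℝ}
    (hball : (#{x : Fin L → Bool | hammingNorm x ≤ k} : ℝ) ≤ 2 ^ β)
    (T : (Fin M → Fin L → Bool) → Finset (Fin M)) {S : Finset (Fin M → Fin L → Bool)}
    (hS : ∀ a ∈ S, (T a).Nonempty ∧ IsHammingCover k (T a) a) :
    ∑ a ∈ S, (2 : ℝ) ^ (-coverCodeLength M L β #(T a)) ≤ 1 := by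
  rw [← sum_fiberwise S T]
  calc _ ≤ ∑ _t : Finset (Fin M), ((2 : ℝ) ^ M)⁻¹ := sum_le_sum fun t _ => ?_
    _ = 1 := by simp [Fintype.card_finset]
  rcases t.eq_empty_or_nonempty with rfl | ht
  · rw [sum_eq_zero fun a ha => absurd (hS a (mem_filter.1 ha).1).1 (by simp [(mem_filter.1 ha).2])]
    positivity
  set N : ℝ := (2 ^ L) ^ #t * (#t * 2 ^ β) ^ (M - #t)
  have hN : 0 < N := by have := ht.card_pos; positivity
  have hfiber : #{a ∈ S | T a = t} ≤ #{a : Fin M → Fin L → Bool | IsHammingCover k t a} :=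
    card_le_card fun a ha => by
      obtain ⟨haS, rfl⟩ := mem_filter.1 ha
      simpa using (hS a haS).2
  have hcount : (#{a ∈ S | T a = t} : ℝ) ≤ N := by
    refine (Nat.cast_le.2 (hfiber.trans (card_filter_isHammingCover_le L k t))).trans ?_
    push_cast
    rw [Fintype.card_fin]
    unfold N
    gcongr
  calc ∑ a ∈ S with T a = t, (2 : ℝ) ^ (-coverCodeLength M L β #(T a))
      = #{a ∈ S | T a = t} * (2 ^ M * N)⁻¹ := by
        rw [sum_congr rfl fun a ha => by rw [(mem_filter.1 ha).2, rpow_neg zero_le_two,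
          two_rpow_coverCodeLength β ht], sum_const, nsmul_eq_mul]
    _ ≤ N * (2 ^ M * N)⁻¹ := mul_le_mul_of_nonneg_right hcount (by positivity)
    _ = (2 ^ M)⁻¹ := by field_simp

theorem concaveOn_coverCodeLength (M L : ℕ) (β : ℝ) :
    ConcaveOn ℝ (Set.Ioi 0) (coverCodeLength M L β) := by
  have hlog : ConcaveOn ℝ (Set.Ioi 0) ((M / log 2) • log) :=
    strictConcaveOn_log_Ioi.concaveOn.smul (by positivity)
  have hent : ConcaveOn ℝ (Set.Ioi 0) ((log 2)⁻¹ • negMulLog) :=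
    (concaveOn_negMulLog.subset (Set.Ioi_subset_Ici le_rfl) (convex_Ioi 0)).smul (by positivity)
  have haff : ConcaveOn ℝ (Set.Ioi 0) fun x => (L - β) * x + (M + M * β) :=
    ((LinearMap.mul ℝ ℝ (L - β)).concaveOn (convex_Ioi 0)).add_const _
  have hsplit : coverCodeLength M L β =
      (M / log 2) • log + (log 2)⁻¹ • negMulLog + fun x => (L - β) * x + (M + M * β) := by
    funext x
    simp only [coverCodeLength, Pi.add_apply, Pi.smul_apply, smul_eq_mul, negMulLog, logb]
    field_simp
    ring
  exact hsplit ▸ (hlog.add hent).add haff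

theorem ConcaveOn.sum_mul_le_map_sum_mul {Ω : Type*} [Fintype Ω] {s : Set ℝ} {f : ℝ → ℝ}
    (hf : ConcaveOn ℝ s f) {p X : Ω → ℝ} (hp : ∀ ω, 0 ≤ p ω) (hsum : ∑ ω, p ω = 1)
    (hX : ∀ ω, p ω ≠ 0 → X ω ∈ s) :
    ∑ ω, p ω * f (X ω) ≤ f (∑ ω, p ω * X ω) := by
  classical
  have hsupp : ∀ g : Ω → ℝ, ∑ ω with p ω ≠ 0, p ω * g ω = ∑ ω, p ω * g ω := fun g =>
    sum_filter_of_ne fun ω _ h => left_ne_zero_of_mul h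
  rw [← hsupp, ← hsupp]
  exact hf.le_map_sum (fun ω _ => hp ω) (by simpa [hsum] using hsupp 1)
    fun ω hω => hX ω (mem_filter.1 hω).2

theorem stmt_15_general {Ω : Type*} [Fintype Ω]
    (M L : ℕ) (hM : 0 < M) (α : ℝ) (hα0 : 0 < α) (hα : α < 1 / 2)
    (p : Ω → ℝ) (hp : ∀ ω, 0 ≤ p ω) (hsum : ∑ ω, p ω = 1)
    (Y : Ω → (Fin M → Fin L → Bool))
    (T : (Fin M → Fin L → Bool) → Finset (Fin M))
    (hcover : ∀ ω, p ω ≠ 0 → ∀ i ∉ T (Y ω),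
      ∃ j ∈ T (Y ω), (hammingDist (Y ω i) (Y ω j) : ℝ) ≤ α * L) :
    shEnt p Y ≤ (M : ℝ) + (L : ℝ) * (∑ ω, p ω * ((T (Y ω)).card : ℝ)) +
      ((M : ℝ) - ∑ ω, p ω * ((T (Y ω)).card : ℝ)) *
        (Real.logb 2 (∑ ω, p ω * ((T (Y ω)).card : ℝ)) + (L : ℝ) * binEnt α) := by
  classical
  have : Nonempty (Fin M) := ⟨⟨0, hM⟩⟩
  set k := ⌊α * L⌋₊
  have hball : (#{x : Fin L → Bool | hammingNorm x ≤ k} : ℝ) ≤ 2 ^ (L * binEnt α) := by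
    refine (Nat.cast_le.2 (card_filter_hammingNorm_le_le_sum_choose k)).trans ?_
    simpa using sum_range_choose_le_two_rpow_mul_binEnt hα0 hα.le (Nat.floor_le (by positivity))
  have hcov : ∀ ω, p ω ≠ 0 → IsHammingCover k (T (Y ω)) (Y ω) := fun ω hω i hi =>
    (hcover ω hω i hi).imp fun _ ⟨hj, hd⟩ => ⟨hj, Nat.le_floor hd⟩
  set S := image Y {ω | p ω ≠ 0}
  have hS : ∀ a ∈ S, (T a).Nonempty ∧ IsHammingCover k (T a) a := by
    simp only [S, mem_image, mem_filter, mem_univ, true_and]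
    rintro _ ⟨ω, hω, rfl⟩
    exact ⟨(hcov ω hω).nonempty, hcov ω hω⟩
  calc shEnt p Y ≤ ∑ ω, p ω * coverCodeLength M L (L * binEnt α) #(T (Y ω)) :=
        shEnt_le_sum_mul_of_sum_two_rpow_neg_le_one hp hsum
          (sum_two_rpow_neg_coverCodeLength_le_one hball T hS)
          fun ω hω => mem_image_of_mem Y (by simpa using hω)
    _ ≤ _ := (concaveOn_coverCodeLength M L _).sum_mul_le_map_sum_mul hp hsum
        fun ω hω => Set.mem_Ioi.2 (by exact_mod_cast (hcov ω hω).nonempty.card_pos)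

/-- Let Y = (Y₁,…,Y_M) be random binary strings of length L, and T = T(Y) a
deterministic subset of indices such that a.s. every string outside T is
within Hamming distance αL of some string in T, 0 < α < 1/2.  Then
H(Y) ≤ M + L·E|T| + (M − E|T|)(log₂ E|T| + L·H(α)). -/
theorem stmt_15 {Ω : Type*} [Fintype Ω]
    (M L : ℕ) (hM : 0 < M) (hL : 0 < L) (α : ℝ) (hα0 : 0 < α) (hα : α < 1 / 2)
    (p : Ω → ℝ) (hp : ∀ ω, 0 ≤ p ω) (hsum : ∑ ω, p ω = 1)
    (Y : Ω → (Fin M → Fin L → Bool))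
    (T : (Fin M → Fin L → Bool) → Finset (Fin M))
    (hcover : ∀ ω, p ω ≠ 0 → ∀ i ∉ T (Y ω),
      ∃ j ∈ T (Y ω), (hammingDist (Y ω i) (Y ω j) : ℝ) ≤ α * L)
    (hET : 1 ≤ ∑ ω, p ω * ((T (Y ω)).card : ℝ)) :
    shEnt p Y ≤ (M : ℝ) + (L : ℝ) * (∑ ω, p ω * ((T (Y ω)).card : ℝ)) +
      ((M : ℝ) - ∑ ω, p ω * ((T (Y ω)).card : ℝ)) *
        (Real.logb 2 (∑ ω, p ω * ((T (Y ω)).card : ℝ)) + (L : ℝ) * binEnt α) :=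
  stmt_15_general M L hM α hα0 hα p hp hsum Y T hcover
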